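/- arXiv:1810.02808 — 5 statements merged into one kernel-verified Lean document; each statement's English description precedes it below -/
import Mathlib

section
/- Let A be an n×n real matrix all of whose eigenvalues have real part less than −k for some k > 0. Then there exists an inner product ⟨·,·⟩ on ℝ^n such that ⟨Ax, x⟩ ≤ −k⟨x, x⟩ for all x ∈ ℝ^n. -/
/-!
Split `ℂⁿ` into the generalized eigenspaces of `A`. On the one for `μ`, with `ε = -k - re μ > 0`,
the map `N = ε⁻¹ (A - μ)` is nilpotent and `A = μ + ε N`. By AM-GM between consecutive terms,
`∑ⱼ re ⟪Nʲ u, Nʲ⁺¹ u⟫ ≤ ∑ⱼ ‖Nʲ u‖²`, since the shifted sum misses only `‖u‖²` as `N` is nilpotent.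
Hence `⟪u, v⟫' = ∑ⱼ ⟪Nʲ u, Nʲ v⟫` satisfies `re ⟪u, A u⟫' ≤ (re μ + ε) ⟪u, u⟫' = -k ⟪u, u⟫'`.
Declaring the generalized eigenspaces orthogonal and restricting the real part of the resulting
form to `ℝⁿ ⊆ ℂⁿ` gives `B`.
-/

open Finset Matrix RCLike
open scoped InnerProductSpace

section InnerProduct

variable {𝕜 E : Type*} [RCLike 𝕜] [NormedAddCommGroup E] [InnerProductSpace 𝕜 E]

theorem sum_range_re_inner_succ_le {v : ℕ → E} {m : ℕ} (hv : v m = 0) :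
    ∑ j ∈ range m, re ⟪v j, v (j + 1)⟫_𝕜 ≤ ∑ j ∈ range m, ‖v j‖ ^ 2 := by
  have hamgm : ∀ j, re ⟪v j, v (j + 1)⟫_𝕜 ≤ (‖v j‖ ^ 2 + ‖v (j + 1)‖ ^ 2) / 2 := fun j => by
    nlinarith [re_inner_le_norm (𝕜 := 𝕜) (v j) (v (j + 1)), two_mul_le_add_sq ‖v j‖ ‖v (j + 1)‖]
  have hshift : ∑ j ∈ range m, ‖v (j + 1)‖ ^ 2 ≤ ∑ j ∈ range m, ‖v j‖ ^ 2 := by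
    have := sum_range_succ' (fun j => ‖v j‖ ^ 2) m
    rw [sum_range_succ, hv, norm_zero] at this
    linarith [sq_nonneg ‖v 0‖]
  calc ∑ j ∈ range m, re ⟪v j, v (j + 1)⟫_𝕜
      ≤ ∑ j ∈ range m, (‖v j‖ ^ 2 + ‖v (j + 1)‖ ^ 2) / 2 := sum_le_sum fun j _ => hamgm j
    _ ≤ ∑ j ∈ range m, ‖v j‖ ^ 2 := by
      rw [← sum_div, sum_add_distrib]; linarith

theorem norm_sq_le_sum_range_norm_sq {v : ℕ → E} {m : ℕ} (hv : v m = 0) :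
    ‖v 0‖ ^ 2 ≤ ∑ j ∈ range m, ‖v j‖ ^ 2 := by
  cases m with
  | zero => simp [hv]
  | succ m =>
    rw [sum_range_succ']
    exact le_add_of_nonneg_left (sum_nonneg fun j _ => sq_nonneg _)

theorem sum_range_re_inner_pow_apply_le {N f : Module.End 𝕜 E} {c : 𝕜} {ε : ℝ} (hε : 0 ≤ ε)
    (hf : f = c • 1 + (ε : 𝕜) • N) {u : E} {m : ℕ} (hu : (N ^ m) u = 0) :
    ∑ j ∈ range m, re ⟪(N ^ j) u, (N ^ j) (f u)⟫_𝕜 ≤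
      (re c + ε) * ∑ j ∈ range m, ‖(N ^ j) u‖ ^ 2 := by
  have hpow : ∀ j, (N ^ j) (f u) = c • (N ^ j) u + (ε : 𝕜) • (N ^ (j + 1)) u := fun j => by
    simp [hf, pow_succ, Module.End.mul_apply]
  have hterm : ∀ j, re ⟪(N ^ j) u, (N ^ j) (f u)⟫_𝕜
      = re c * ‖(N ^ j) u‖ ^ 2 + ε * re ⟪(N ^ j) u, (N ^ (j + 1)) u⟫_𝕜 := fun j => by
    rw [hpow, inner_add_right, inner_smul_right, inner_smul_right, inner_self_eq_norm_sq_to_K,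
      ← ofReal_pow, map_add, re_mul_ofReal, re_ofReal_mul]
  have key := sum_range_re_inner_succ_le (𝕜 := 𝕜) (v := fun j => (N ^ j) u) hu
  simp only [hterm, sum_add_distrib, ← mul_sum]
  linarith [mul_le_mul_of_nonneg_left key hε]

end InnerProduct

namespace DirectSum.IsInternal

variable {R M ι : Type*} [Ring R] [AddCommGroup M] [Module R M] [DecidableEq ι]
  {A : ι → Submodule R M} (h : IsInternal A)

noncomputable def proj (i : ι) : M →ₗ[R] M :=
  (A i).subtype ∘ₗ component R ι (fun i => A i) i ∘ₗ
    (LinearEquiv.ofBijective (coeLinearMap A) h).symm.toLinearMap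

theorem proj_apply_mem (i : ι) (x : M) : h.proj i x ∈ A i :=
  (component R ι (fun i => A i) i _).2

theorem proj_apply_of_mem {i : ι} {x : M} (hx : x ∈ A i) : h.proj i x = x := by
  change ((LinearEquiv.ofBijective (coeLinearMap A) h).symm x i : M) = x
  rw [h.ofBijective_coeLinearMap_of_mem hx]

theorem proj_apply_of_mem_ne {i j : ι} (hij : i ≠ j) {x : M} (hx : x ∈ A j) :
    h.proj i x = 0 := by
  change ((LinearEquiv.ofBijective (coeLinearMap A) h).symm x i : M) = 0
  rw [h.ofBijective_coeLinearMap_of_mem_ne hij.symm hx, ZeroMemClass.coe_zero]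

theorem sum_proj_apply [Fintype ι] (x : M) : ∑ i, h.proj i x = x := by
  refine Submodule.iSup_induction A (motive := fun x => ∑ i, h.proj i x = x)
    (h.submodule_iSup_eq_top ▸ Submodule.mem_top) ?_ ?_ ?_
  · intro j y hy
    rw [Finset.sum_eq_single j (fun i _ hij => h.proj_apply_of_mem_ne hij hy) (by simp),
      h.proj_apply_of_mem hy]
  · simp
  · intro y z hy hz
    simp only [map_add, Finset.sum_add_distrib, hy, hz]

theorem proj_apply_map {f : M →ₗ[R] M} (hf : ∀ i, Set.MapsTo f (A i) (A i)) (i : ι) (x : M) :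
    h.proj i (f x) = f (h.proj i x) := by
  refine Submodule.iSup_induction A (motive := fun x => h.proj i (f x) = f (h.proj i x))
    (h.submodule_iSup_eq_top ▸ Submodule.mem_top) ?_ ?_ ?_
  · intro j y hy
    rcases eq_or_ne i j with rfl | hij
    · rw [h.proj_apply_of_mem hy, h.proj_apply_of_mem (hf i hy)]
    · rw [h.proj_apply_of_mem_ne hij hy, h.proj_apply_of_mem_ne hij (hf j hy), map_zero]
  · simp
  · intro y z hy hz
    simp only [map_add, hy, hz]

end DirectSum.IsInternal

theorem DirectSum.IsInternal.exists_bilinForm_contracting {V ι : Type*} [NormedAddCommGroup V]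
    [InnerProductSpace ℂ V] [Fintype ι] [DecidableEq ι] {A : ι → Submodule ℂ V}
    (hA : DirectSum.IsInternal A) {f : Module.End ℂ V} (hfA : ∀ i, Set.MapsTo f (A i) (A i))
    {c : ι → ℂ} {m : ℕ} (hnil : ∀ i, ∀ x ∈ A i, ((f - c i • 1) ^ m) x = 0) {k : ℝ}
    (hc : ∀ i, (c i).re < -k) :
    ∃ β : LinearMap.BilinForm ℝ V, β.IsSymm ∧ (∀ x, x ≠ 0 → 0 < β x x) ∧
      ∀ x, β x (f x) ≤ -k * β x x := by
  let _ : InnerProductSpace ℝ V := InnerProductSpace.complexToReal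
  set ε : ι → ℝ := fun i => -k - (c i).re
  have hε : ∀ i, 0 < ε i := fun i => by linarith [hc i]
  set N : ι → Module.End ℂ V := fun i => ((ε i)⁻¹ : ℂ) • (f - c i • 1)
  have hf : ∀ i, f = c i • 1 + (ε i : ℂ) • N i := fun i => by
    rw [smul_smul, mul_inv_cancel₀ (by exact_mod_cast (hε i).ne'), one_smul, add_sub_cancel]
  have hN : ∀ i x, (N i ^ m) (hA.proj i x) = 0 := fun i x => by
    rw [smul_pow, LinearMap.smul_apply, hnil i _ (hA.proj_apply_mem i x), smul_zero]
  let T : ι → ℕ → V →ₗ[ℝ] V := fun i j => ((N i ^ j) ∘ₗ hA.proj i).restrictScalars ℝ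
  set β : LinearMap.BilinForm ℝ V := ∑ i, ∑ j ∈ range m, (innerₗ V).compl₁₂ (T i j) (T i j)
  have hβ : ∀ x y, β x y = ∑ i, ∑ j ∈ range m,
      re ⟪(N i ^ j) (hA.proj i x), (N i ^ j) (hA.proj i y)⟫_ℂ := fun x y => by
    simp [β, T, LinearMap.sum_apply, real_inner_eq_re_inner ℂ]
  have hβself : ∀ x, β x x = ∑ i, ∑ j ∈ range m, ‖(N i ^ j) (hA.proj i x)‖ ^ 2 := fun x => by
    simp only [hβ, inner_self_eq_norm_sq]
  refine ⟨β, ⟨fun x y => ?_⟩, fun x hx => ?_, fun x => ?_⟩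
  · simp only [hβ, ← real_inner_eq_re_inner ℂ, real_inner_comm]
  · obtain ⟨i, hi⟩ : ∃ i, hA.proj i x ≠ 0 := by
      by_contra! h
      exact hx (by rw [← hA.sum_proj_apply x]; simp [h])
    calc 0 < ‖hA.proj i x‖ ^ 2 := by positivity
      _ ≤ ∑ j ∈ range m, ‖(N i ^ j) (hA.proj i x)‖ ^ 2 :=
        norm_sq_le_sum_range_norm_sq (v := fun j => (N i ^ j) (hA.proj i x)) (hN i x)
      _ ≤ β x x := by
        rw [hβself]
        exact single_le_sum (f := fun i => ∑ j ∈ range m, ‖(N i ^ j) (hA.proj i x)‖ ^ 2)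
          (fun i _ => sum_nonneg fun j _ => sq_nonneg _) (mem_univ i)
  · calc β x (f x)
        ≤ ∑ i, ((c i).re + ε i) * ∑ j ∈ range m, ‖(N i ^ j) (hA.proj i x)‖ ^ 2 := by
          rw [hβ]
          refine sum_le_sum fun i _ => ?_
          simp only [hA.proj_apply_map hfA]
          exact sum_range_re_inner_pow_apply_le (hε i).le (hf i) (hN i x)
      _ = -k * β x x := by
          rw [hβself, mul_sum]
          exact sum_congr rfl fun i _ => by ring

theorem Module.End.isInternal_maxGenEigenspace {V : Type*} [AddCommGroup V] [Module ℂ V]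
    [FiniteDimensional ℂ V] (f : Module.End ℂ V) :
    DirectSum.IsInternal fun μ : f.finite_hasEigenvalue.toFinset => f.maxGenEigenspace μ := by
  refine DirectSum.isInternal_submodule_of_iSupIndep_of_iSup_eq_top
    (f.independent_maxGenEigenspace.comp Subtype.val_injective) ?_
  rw [eq_top_iff, ← f.iSup_maxGenEigenspace_eq_top]
  refine iSup_le fun μ => ?_
  by_cases hμ : f.HasEigenvalue μ
  · exact le_iSup (fun ν : f.finite_hasEigenvalue.toFinset => f.maxGenEigenspace ν)
      ⟨μ, by simpa using hμ⟩
  · have : f.maxGenEigenspace μ = ⊥ := by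
      by_contra h
      exact hμ ((Module.End.hasUnifEigenvalue_iff_hasUnifEigenvalue_one (by simp)).mp h)
    simp [this]

theorem Module.End.exists_bilinForm_contracting {V : Type*} [NormedAddCommGroup V]
    [InnerProductSpace ℂ V] [FiniteDimensional ℂ V] (f : Module.End ℂ V) {k : ℝ}
    (hf : ∀ μ, f.HasEigenvalue μ → μ.re < -k) :
    ∃ β : LinearMap.BilinForm ℝ V, β.IsSymm ∧ (∀ x, x ≠ 0 → 0 < β x x) ∧
      ∀ x, β x (f x) ≤ -k * β x x := by
  refine f.isInternal_maxGenEigenspace.exists_bilinForm_contracting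
    (fun μ => Module.End.mapsTo_maxGenEigenspace_of_comm (Commute.refl f) μ)
    (m := Module.finrank ℂ V) (fun μ x hx => ?_)
    (fun μ => hf μ ((Set.Finite.mem_toFinset _).mp μ.2))
  rw [Module.End.maxGenEigenspace_eq_genEigenspace_finrank, Module.End.mem_genEigenspace_nat,
    LinearMap.mem_ker] at hx
  exact hx

namespace LinearMap.BilinForm

variable {n : Type*} [Fintype n] [DecidableEq n]

theorem dotProduct_toMatrix'_mulVec (β : LinearMap.BilinForm ℝ (n → ℝ)) (x y : n → ℝ) :
    x ⬝ᵥ β.toMatrix' *ᵥ y = β x y := by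
  rw [← toBilin'_apply', toBilin'_toMatrix']

theorem posDef_toMatrix' {β : LinearMap.BilinForm ℝ (n → ℝ)} (hsymm : β.IsSymm)
    (hpos : ∀ x, x ≠ 0 → 0 < β x x) : β.toMatrix'.PosDef :=
  posDef_iff_dotProduct_mulVec.mpr ⟨isSymm_toMatrix'_iff_isSymm.mpr hsymm, fun x hx => by
    rw [star_trivial, dotProduct_toMatrix'_mulVec]
    exact hpos x hx⟩

end LinearMap.BilinForm

noncomputable def euclideanOfReal (n : Type*) : (n → ℝ) →ₗ[ℝ] EuclideanSpace ℂ n :=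
  (WithLp.linearEquiv 2 ℝ (n → ℂ)).symm.toLinearMap ∘ₗ Complex.ofRealAm.toLinearMap.compLeft n

theorem euclideanOfReal_injective {n : Type*} : Function.Injective (euclideanOfReal n) :=
  fun _ _ h => funext fun i => Complex.ofReal_injective (congrFun (congrArg WithLp.ofLp h) i)

theorem toLpLin_map_ofReal_euclideanOfReal {n : Type*} [Fintype n] [DecidableEq n]
    (A : Matrix n n ℝ) (x : n → ℝ) :
    toLpLin 2 2 (A.map (Complex.ofReal ·)) (euclideanOfReal n x) = euclideanOfReal n (A *ᵥ x) := by
  ext i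
  exact (RingHom.map_mulVec Complex.ofRealHom A x i).symm

theorem lyapunov_inner_product_general {n : ℕ} (A : Matrix (Fin n) (Fin n) ℝ) (k : ℝ)
    (hspec : ∀ μ ∈ spectrum ℂ (A.map (Complex.ofReal ·)), μ.re < -k) :
    ∃ B : Matrix (Fin n) (Fin n) ℝ, B.IsSymm ∧ B.PosDef ∧
      ∀ x : Fin n → ℝ,
        (A.mulVec x) ⬝ᵥ (B.mulVec x) ≤ -k * (x ⬝ᵥ (B.mulVec x)) := by
  obtain ⟨β, hsymm, hpos, hcontr⟩ :=
    Module.End.exists_bilinForm_contracting (toLpLin 2 2 (A.map (Complex.ofReal ·))) fun μ hμ =>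
      hspec μ (spectrum_toLpLin (A := A.map (Complex.ofReal ·)) 2 ▸ hμ.mem_spectrum)
  let ι := euclideanOfReal (Fin n)
  let β' : LinearMap.BilinForm ℝ (Fin n → ℝ) := β.compl₁₂ ι ι
  have hsymm' : β'.IsSymm := ⟨fun x y => hsymm.eq (ι x) (ι y)⟩
  refine ⟨β'.toMatrix', LinearMap.BilinForm.isSymm_toMatrix'_iff_isSymm.mpr hsymm',
    LinearMap.BilinForm.posDef_toMatrix' hsymm' fun x hx =>
      hpos _ ((map_ne_zero_iff ι euclideanOfReal_injective).mpr hx), fun x => ?_⟩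
  rw [LinearMap.BilinForm.dotProduct_toMatrix'_mulVec,
    LinearMap.BilinForm.dotProduct_toMatrix'_mulVec, hsymm'.eq]
  change β (ι x) (ι (A *ᵥ x)) ≤ -k * β (ι x) (ι x)
  rw [← toLpLin_map_ofReal_euclideanOfReal]
  exact hcontr (ι x)

/-- Lyapunov inner product: if all (complex) eigenvalues of a real `n × n`
matrix `A` have real part less than `-k`, then there is an inner product on
`ℝⁿ`, represented by a symmetric positive definite matrix `B`, such that
`⟨A x, x⟩_B ≤ -k ⟨x, x⟩_B` for all `x`. -/
theorem lyapunov_inner_product {n : ℕ} (A : Matrix (Fin n) (Fin n) ℝ) (k : ℝ)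
    (hk : 0 < k)
    (hspec : ∀ μ ∈ spectrum ℂ (A.map (Complex.ofReal ·)), μ.re < -k) :
    ∃ B : Matrix (Fin n) (Fin n) ℝ, B.IsSymm ∧ B.PosDef ∧
      ∀ x : Fin n → ℝ,
        (A.mulVec x) ⬝ᵥ (B.mulVec x) ≤ -k * (x ⬝ᵥ (B.mulVec x)) :=
  lyapunov_inner_product_general A k hspec
end

section
/- Let f : U → ℝ^n (U ⊆ ℝ^n open and convex) be C¹ with ∂f_i/∂x_j ≥ 0 on U for all i ≠ j (a cooperative/monotone vector field). Let p ∈ U with f_i(p) > 0 for all i. Then for any point y ∈ U with y ≥ p (componentwise) and y_i = p_i for some index i, we have f_i(y) > 0. Consequently the vector field points strictly into the set K₂(p) = {x ∈ U : x ≥ p} along its boundary in each coordinate direction where the boundary is active. -/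
/-!
By the mean value theorem applied to `f i` on the segment `[p, y]`,
`f y i - f p i = f' z (y - p) i` for some `z` on the segment. Expanding `y - p ≥ 0` in the
standard basis, its `i`-th coordinate vanishes, so only off-diagonal entries of `f' z` contribute,
each with a nonnegative weight; hence `f y i ≥ f p i > 0`.
-/

variable {ι : Type*} [Fintype ι] [DecidableEq ι]

def IsMetzler (L : (ι → ℝ) →L[ℝ] (ι → ℝ)) : Prop :=
  ∀ i j, i ≠ j → 0 ≤ L (Pi.single j 1) i

theorem IsMetzler.apply_nonneg {L : (ι → ℝ) →L[ℝ] (ι → ℝ)} (hL : IsMetzler L)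
    {v : ι → ℝ} (hv : 0 ≤ v) {i : ι} (hvi : v i = 0) : 0 ≤ L v i := by
  rw [pi_eq_sum_univ' v, map_sum, Finset.sum_apply]
  refine Finset.sum_nonneg fun j _ => ?_
  rcases eq_or_ne j i with rfl | hji
  · simp [hvi]
  · simpa only [map_smul, Pi.smul_apply, smul_eq_mul] using mul_nonneg (hv j) (hL i j hji.symm)

theorem Convex.apply_le_apply_of_isMetzler {s : Set (ι → ℝ)} (hs : Convex ℝ s)
    {f : (ι → ℝ) → (ι → ℝ)} {f' : (ι → ℝ) → ((ι → ℝ) →L[ℝ] (ι → ℝ))}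
    (hf : ∀ x ∈ s, HasFDerivAt f (f' x) x) (hf' : ∀ x ∈ s, IsMetzler (f' x))
    {x y : ι → ℝ} (hx : x ∈ s) (hy : y ∈ s) (hxy : x ≤ y) {i : ι} (hxyi : y i = x i) :
    f x i ≤ f y i := by
  let πi := ContinuousLinearMap.proj (R := ℝ) (φ := fun _ : ι => ℝ) i
  have hfi : ∀ z ∈ s, HasFDerivWithinAt (fun z => f z i) (πi.comp (f' z)) s z := fun z hz =>
    (πi.hasFDerivAt.comp z (hf z hz)).hasFDerivWithinAt
  obtain ⟨z, hzxy, hmvt⟩ := domain_mvt hfi hs hx hy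
  have hz : z ∈ s := hs.segment_subset hx hy hzxy
  have hdiff : 0 ≤ f' z (y - x) i :=
    (hf' z hz).apply_nonneg (sub_nonneg.mpr hxy) (by simp [hxyi])
  simp only [πi, ContinuousLinearMap.comp_apply, ContinuousLinearMap.proj_apply] at hmvt
  linarith

theorem cooperative_inflow_K2_general {n : ℕ}
    (U : Set (Fin n → ℝ)) (hUconv : Convex ℝ U)
    (f : (Fin n → ℝ) → (Fin n → ℝ))
    (f' : (Fin n → ℝ) → ((Fin n → ℝ) →L[ℝ] (Fin n → ℝ)))
    (hf : ∀ x ∈ U, HasFDerivAt f (f' x) x)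
    (hcoop : ∀ x ∈ U, ∀ i j : Fin n, i ≠ j → 0 ≤ f' x (Pi.single j 1) i)
    (p : Fin n → ℝ) (hp : p ∈ U) (hfp : ∀ i, 0 < f p i)
    (y : Fin n → ℝ) (hy : y ∈ U) (hpy : p ≤ y)
    (i : Fin n) (hyi : y i = p i) :
    0 < f y i :=
  (hfp i).trans_le (hUconv.apply_le_apply_of_isMetzler hf hcoop hp hy hpy hyi)

/-- Cooperative vector fields point strictly into `K₂(p) = {x : x ≥ p}` along
its boundary: if `f` is `C¹` on an open convex set `U` with nonnegative
off-diagonal partial derivatives, `f i p > 0` for all `i`, and `y ≥ p` with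
`y i = p i` for some `i`, then `f i y > 0`. The partial derivatives are
expressed via a derivative `f'` of `f` on `U`. -/
theorem cooperative_inflow_K2 {n : ℕ}
    (U : Set (Fin n → ℝ)) (hU : IsOpen U) (hUconv : Convex ℝ U)
    (f : (Fin n → ℝ) → (Fin n → ℝ))
    (f' : (Fin n → ℝ) → ((Fin n → ℝ) →L[ℝ] (Fin n → ℝ)))
    (hf : ∀ x ∈ U, HasFDerivAt f (f' x) x)
    (hf'cont : ContinuousOn f' U)
    (hcoop : ∀ x ∈ U, ∀ i j : Fin n, i ≠ j → 0 ≤ f' x (Pi.single j 1) i)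
    (p : Fin n → ℝ) (hp : p ∈ U) (hfp : ∀ i, 0 < f p i)
    (y : Fin n → ℝ) (hy : y ∈ U) (hpy : p ≤ y)
    (i : Fin n) (hyi : y i = p i) :
    0 < f y i :=
  cooperative_inflow_K2_general U hUconv f f' hf hcoop p hp hfp y hy hpy i hyi
end

section
/- Let f : U → ℝ^n (U ⊆ ℝ^n open and convex) be C¹ with ∂f_i/∂x_j ≥ 0 on U for all i ≠ j. Let p ∈ U with f_i(p) < 0 for all i. Then for any y ∈ U with y ≤ p componentwise and y_i = p_i for some i, we have f_i(y) < 0; i.e., the vector field points strictly into K₁(p) = {x ∈ U : x ≤ p} along its boundary. -/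
/-! Along the segment from `p` to `y` the mean value theorem writes `f y i - f p i` as
`Df(z) (y - p)` at some `z`, evaluated at `i`. Since `y - p` vanishes at `i` and is
nonpositive elsewhere, this is a combination of off-diagonal partials `∂f_i/∂x_j ≥ 0`
with nonpositive coefficients, so `f y i ≤ f p i < 0`. -/

theorem apply_nonpos_of_offDiag_nonneg {ι : Type*} [Fintype ι] [DecidableEq ι]
    (L : (ι → ℝ) →L[ℝ] (ι → ℝ)) (i : ι)
    (hL : ∀ j, j ≠ i → 0 ≤ L (Pi.single j 1) i)
    {d : ι → ℝ} (hd : d ≤ 0) (hdi : d i = 0) :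
    L d i ≤ 0 := by
  have hsum : L d i = ∑ j, d j * L (Pi.single j 1) i := by
    conv_lhs => rw [← Finset.univ_sum_single d]
    simp only [map_sum, Finset.sum_apply]
    refine Finset.sum_congr rfl fun j _ => ?_
    rw [← smul_eq_mul, ← Pi.smul_apply, ← map_smul, ← Pi.single_smul', smul_eq_mul, mul_one]
  rw [hsum]
  refine Finset.sum_nonpos fun j _ => ?_
  rcases eq_or_ne j i with rfl | hji
  · simp [hdi]
  · exact mul_nonpos_of_nonpos_of_nonneg (hd j) (hL j hji)

theorem cooperative_inflow_K1_general {n : ℕ}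
    (U : Set (Fin n → ℝ)) (hUconv : Convex ℝ U)
    (f : (Fin n → ℝ) → (Fin n → ℝ))
    (f' : (Fin n → ℝ) → ((Fin n → ℝ) →L[ℝ] (Fin n → ℝ)))
    (hf : ∀ x ∈ U, HasFDerivAt f (f' x) x)
    (hcoop : ∀ x ∈ U, ∀ i j : Fin n, i ≠ j → 0 ≤ f' x (Pi.single j 1) i)
    (p : Fin n → ℝ) (hp : p ∈ U) (hfp : ∀ i, f p i < 0)
    (y : Fin n → ℝ) (hy : y ∈ U) (hpy : y ≤ p)
    (i : Fin n) (hyi : y i = p i) :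
    f y i < 0 := by
  obtain ⟨z, hz, hmvt⟩ := domain_mvt (f := fun x => f x i)
    (f' := fun x => (ContinuousLinearMap.proj i).comp (f' x))
    (fun x hx => (hasFDerivAt_pi'.1 (hf x hx) i).hasFDerivWithinAt)
    hUconv hp hy
  have hdecr : f' z (y - p) i ≤ 0 :=
    apply_nonpos_of_offDiag_nonneg (f' z) i
      (fun j hji => hcoop z (hUconv.segment_subset hp hy hz) i j hji.symm)
      (sub_nonpos.2 hpy) (sub_eq_zero.2 hyi)
  simp only [ContinuousLinearMap.comp_apply, ContinuousLinearMap.proj_apply] at hmvt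
  linarith [hfp i]

/-- Cooperative vector fields point strictly into `K₁(p) = {x : x ≤ p}` along
its boundary: if `f` is `C¹` on an open convex set `U` with nonnegative
off-diagonal partial derivatives, `f i p < 0` for all `i`, and `y ≤ p` with
`y i = p i` for some `i`, then `f i y < 0`. The partial derivatives are
expressed via a derivative `f'` of `f` on `U`. -/
theorem cooperative_inflow_K1 {n : ℕ}
    (U : Set (Fin n → ℝ)) (hU : IsOpen U) (hUconv : Convex ℝ U)
    (f : (Fin n → ℝ) → (Fin n → ℝ))
    (f' : (Fin n → ℝ) → ((Fin n → ℝ) →L[ℝ] (Fin n → ℝ)))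
    (hf : ∀ x ∈ U, HasFDerivAt f (f' x) x)
    (hf'cont : ContinuousOn f' U)
    (hcoop : ∀ x ∈ U, ∀ i j : Fin n, i ≠ j → 0 ≤ f' x (Pi.single j 1) i)
    (p : Fin n → ℝ) (hp : p ∈ U) (hfp : ∀ i, f p i < 0)
    (y : Fin n → ℝ) (hy : y ∈ U) (hpy : y ≤ p)
    (i : Fin n) (hyi : y i = p i) :
    f y i < 0 :=
  cooperative_inflow_K1_general U hUconv f f' hf hcoop p hp hfp y hy hpy i hyi
end

section
/- Suppose ẋ = f(x, Λ(rt)) is a non-autonomous system with Λ(s) → λ₊ as s → ∞, X₊ an attracting fixed point of ẋ = f(x, λ₊) with basin B(X₊, λ₊), and suppose: (i) there exist ε > 0 and S₁ > 0 such that any solution with x(t₀) ∈ B_ε(X₊) and r t₀ > S₁ converges to X₊; (ii) K ⊆ B(X₊, λ₊) is compact. Then there exists S > 0 such that any solution x(t) with x(T) ∈ K and rT > S satisfies x(t) → X₊ as t → ∞. -/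
open Filter Topology Set Metric

/-!
Each point `y` of the basin enters `B_{ε/2}(X₊)` under the frozen flow at some time `τ`.
On the compact interval `[0, τ]` Grönwall's inequality makes the trajectory of `y` depend
continuously on the initial point and on the parameter, so every solution of the
non-autonomous system that starts close to `y` at a late enough time (when `Λ` is already
close to `λ₊`) enters `B_ε(X₊)`, and hypothesis (i) takes over. Compactness of `K` makes
"close enough" and "late enough" uniform.
-/

theorem tendsto_gronwallBound_zero (K c x : ℝ) :
    Tendsto (fun δ => gronwallBound δ K (c * δ) x) (𝓝 0) (𝓝 0) := by
  have hcont : Continuous fun δ => gronwallBound δ K (c * δ) x := by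
    unfold gronwallBound
    split_ifs <;> fun_prop
  simpa [gronwallBound_ε0_δ0] using hcont.tendsto 0

section
variable {E : Type*} [NormedAddCommGroup E] [NormedSpace ℝ E]

theorem dist_lt_of_approx_trajectories_of_tube {v : E → E} {s : Set E} {K : NNReal}
    (hv : LipschitzOnWith K v s) {g u u' : ℝ → E} {a b δ η R : ℝ} (hη : 0 ≤ η)
    (hg : ∀ t ∈ Icc a b, HasDerivAt g (v (g t)) t)
    (hu : ∀ t ∈ Icc a b, HasDerivAt u (u' t) t)
    (hu' : ∀ t ∈ Icc a b, u t ∈ s → dist (u' t) (v (u t)) ≤ η)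
    (htube : ∀ t ∈ Icc a b, closedBall (g t) R ⊆ s)
    (ha : dist (u a) (g a) ≤ δ) (hR : gronwallBound δ K η (b - a) < R) :
    ∀ t ∈ Icc a b, dist (u t) (g t) < R := by
  by_contra! hexit
  have hcont : ContinuousOn (fun t => dist (u t) (g t)) (Icc a b) := fun t ht =>
    ContinuousAt.continuousWithinAt ((hu t ht).continuousAt.dist (hg t ht).continuousAt)
  -- `t₀` is the first exit time from the tube; before it Grönwall applies on `[a, t₀]`.
  obtain ⟨t₀, ⟨ht₀, hRt₀ : R ≤ dist (u t₀) (g t₀)⟩, hfirst⟩ :=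
    (isCompact_Icc.of_isClosed_subset (hcont.preimage_isClosed_of_isClosed isClosed_Icc
      isClosed_Ici) inter_subset_left).exists_isLeast hexit
  have hIcc : Icc a t₀ ⊆ Icc a b := Icc_subset_Icc_right ht₀.2
  have hinside : ∀ t ∈ Ico a t₀, dist (u t) (g t) < R := fun t ht =>
    not_le.1 fun hle =>
      lt_irrefl _ ((hfirst ⟨hIcc (Ico_subset_Icc_self ht), hle⟩).trans_lt ht.2)
  have hus : ∀ t ∈ Ico a t₀, u t ∈ s := fun t ht =>
    htube t (hIcc (Ico_subset_Icc_self ht)) (mem_closedBall.2 (hinside t ht).le)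
  have hgs : ∀ t ∈ Ico a t₀, g t ∈ s := fun t ht =>
    htube t (hIcc (Ico_subset_Icc_self ht))
      (mem_closedBall_self (dist_nonneg.trans (hinside t ht).le))
  have hgronwall := dist_le_of_approx_trajectories_ODE_of_mem (v := fun _ => v)
    (s := fun _ => s) (fun _ _ => hv) (fun t ht => (hu t (hIcc ht)).continuousAt.continuousWithinAt)
    (fun t ht => (hu t (hIcc (Ico_subset_Icc_self ht))).hasDerivWithinAt)
    (fun t ht => hu' t (hIcc (Ico_subset_Icc_self ht)) (hus t ht)) hus
    (fun t ht => (hg t (hIcc ht)).continuousAt.continuousWithinAt)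
    (fun t ht => (hg t (hIcc (Ico_subset_Icc_self ht))).hasDerivWithinAt)
    (fun t _ => (dist_self _).le) hgs ha t₀ (right_mem_Icc.2 ht₀.1)
  have hmono : gronwallBound δ K (η + 0) (t₀ - a) ≤ gronwallBound δ K η (b - a) := by
    rw [add_zero]
    exact gronwallBound_mono (dist_nonneg.trans ha) hη K.2 (by linarith [ht₀.2])
  linarith

variable [ProperSpace E] {P : Type*} [PseudoMetricSpace P] [ProperSpace P]

theorem ODE_dist_lt_of_close_data_and_parameter {f : E → P → E}
    (hf : LocallyLipschitz (Function.uncurry f)) {p₀ : P} {τ R : ℝ} (hR : 0 < R) {g : ℝ → E}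
    (hg : ∀ t ∈ Icc 0 τ, HasDerivAt g (f (g t) p₀) t) :
    ∃ δ > 0, ∀ (u : ℝ → E) (μ : ℝ → P), (∀ t ∈ Icc 0 τ, HasDerivAt u (f (u t) (μ t)) t) →
      (∀ t ∈ Icc 0 τ, dist (μ t) p₀ < δ) → dist (u 0) (g 0) < δ →
      ∀ t ∈ Icc 0 τ, dist (u t) (g t) < R := by
  obtain ⟨M, hM⟩ := isCompact_Icc.exists_bound_of_continuousOn fun t ht =>
    (hg t ht).continuousAt.continuousWithinAt
  set s := closedBall (0 : E) (M + 1)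
  obtain ⟨L, hL⟩ := LocallyLipschitzOn.exists_lipschitzOnWith_of_compact
    ((isCompact_closedBall (0 : E) (M + 1)).prod (isCompact_closedBall p₀ 1))
    hf.locallyLipschitzOn
  have hLx : LipschitzOnWith L (fun x => f x p₀) s := by
    have := hL.comp (LipschitzWith.prodMk_right p₀).lipschitzOnWith
      (fun x hx => ⟨hx, mem_closedBall_self zero_le_one⟩)
    rwa [mul_one] at this
  have hLμ : ∀ x ∈ s, ∀ μ ∈ closedBall p₀ 1, dist (f x μ) (f x p₀) ≤ L * dist μ p₀ := by
    intro x hx μ hμ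
    simpa [Prod.dist_eq] using
      hL.dist_le_mul (x, μ) ⟨hx, hμ⟩ (x, p₀) ⟨hx, mem_closedBall_self zero_le_one⟩
  have hsmall : ∀ᶠ δ in 𝓝[>] 0, gronwallBound δ L (L * δ) τ < min R 1 ∧ δ ≤ 1 :=
    (((tendsto_gronwallBound_zero L L τ).eventually (gt_mem_nhds (lt_min hR one_pos))).and
      (eventually_le_nhds one_pos)).filter_mono nhdsWithin_le_nhds
  obtain ⟨δ, ⟨hδR, hδ1⟩, hδ⟩ := (hsmall.and self_mem_nhdsWithin).exists
  refine ⟨δ, hδ, fun u μ hu hμ hu0 t ht => ?_⟩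
  refine (dist_lt_of_approx_trajectories_of_tube hLx (mul_nonneg L.2 hδ.le) hg hu ?_ ?_ hu0.le
    (by rwa [sub_zero]) t ht).trans_le (min_le_left _ _)
  · intro t ht hut
    calc dist (f (u t) (μ t)) (f (u t) p₀) ≤ L * dist (μ t) p₀ :=
          hLμ _ hut _ (mem_closedBall.2 ((hμ t ht).le.trans hδ1))
      _ ≤ L * δ := by gcongr; exact (hμ t ht).le
  · intro t ht
    refine closedBall_subset_closedBall' ?_
    have := hM t ht
    rw [dist_zero_right]
    linarith [min_le_right R 1]

theorem eventually_exists_dist_lt_of_tendsto {f : E → P → E}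
    (hf : LocallyLipschitz (Function.uncurry f)) {μ : ℝ → P} {p₀ : P}
    (hμ : Tendsto μ atTop (𝓝 p₀)) {g : ℝ → E} (hg : ∀ t, HasDerivAt g (f (g t) p₀) t) {X : E}
    (hgX : Tendsto g atTop (𝓝 X)) {ε : ℝ} (hε : 0 < ε) :
    ∀ᶠ p in atTop ×ˢ 𝓝 (g 0), ∀ x : ℝ → E, (∀ t, HasDerivAt x (f (x t) (μ t)) t) →
      x p.1 = p.2 → ∃ t ≥ p.1, dist (x t) X < ε := by
  obtain ⟨τ, hτ, hgτ⟩ :=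
    ((eventually_ge_atTop 0).and (hgX.eventually (ball_mem_nhds X (half_pos hε)))).exists
  obtain ⟨δ, hδ, hclose⟩ :=
    ODE_dist_lt_of_close_data_and_parameter hf (half_pos hε) (τ := τ) fun t _ => hg t
  filter_upwards [prod_mem_prod
    (eventually_forall_ge_atTop.2 (hμ.eventually (ball_mem_nhds p₀ hδ)))
    (ball_mem_nhds (g 0) hδ)] with ⟨T, z⟩ ⟨hμT, hz⟩ x hx hxT
  have hxτ : dist (x (T + τ)) (g τ) < ε / 2 :=
    hclose (fun t => x (T + t)) (fun t => μ (T + t))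
      (fun t _ => (hx (T + t)).comp_const_add T t)
      (fun t ht => hμT _ (le_add_of_nonneg_right ht.1)) (by simpa [hxT] using hz)
      τ ⟨hτ, le_rfl⟩
  refine ⟨T + τ, le_add_of_nonneg_right hτ, ?_⟩
  linarith [dist_triangle (x (T + τ)) (g τ) X, mem_ball.1 hgτ]
end

theorem IsCompact.eventually_forall_mem {X Y : Type*} [TopologicalSpace X] {K : Set X}
    (hK : IsCompact K) {l : Filter Y} {P : Y × X → Prop}
    (hP : ∀ x ∈ K, ∀ᶠ p in l ×ˢ 𝓝 x, P p) : ∀ᶠ y in l, ∀ x ∈ K, P (y, x) :=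
  Eventually.curry (hK.mem_prod_nhdsSet_of_forall hP : ∀ᶠ p in l ×ˢ 𝓝ˢ K, P p) |>.mono
    fun _ h => h.self_of_nhdsSet

theorem compact_basin_subset_attracts_general {n : ℕ}
    (f : EuclideanSpace ℝ (Fin n) → ℝ → EuclideanSpace ℝ (Fin n))
    (hf : ContDiff ℝ 2 fun p : EuclideanSpace ℝ (Fin n) × ℝ => f p.1 p.2)
    (Λ : ℝ → ℝ) (lamp : ℝ) (hΛ : Tendsto Λ atTop (𝓝 lamp))
    (r : ℝ) (hr : 0 < r)
    (Xp : EuclideanSpace ℝ (Fin n))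
    (φ : EuclideanSpace ℝ (Fin n) → ℝ → EuclideanSpace ℝ (Fin n))
    (hφ0 : ∀ y, φ y 0 = y)
    (hφ : ∀ y t, HasDerivAt (φ y) (f (φ y t) lamp) t)
    (B : Set (EuclideanSpace ℝ (Fin n)))
    (hB : B = {y | Tendsto (fun t => φ y t) atTop (𝓝 Xp)})
    (ε S₁ : ℝ) (hε : 0 < ε)
    (hi : ∀ (x : ℝ → EuclideanSpace ℝ (Fin n)),
      (∀ t, HasDerivAt x (f (x t) (Λ (r * t))) t) →
      ∀ t₀, dist (x t₀) Xp < ε → S₁ < r * t₀ →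
        Tendsto x atTop (𝓝 Xp))
    (K : Set (EuclideanSpace ℝ (Fin n))) (hK : IsCompact K) (hKB : K ⊆ B) :
    ∃ S > 0, ∀ (x : ℝ → EuclideanSpace ℝ (Fin n)),
      (∀ t, HasDerivAt x (f (x t) (Λ (r * t))) t) →
      ∀ T, x T ∈ K → S < r * T → Tendsto x atTop (𝓝 Xp) := by
  have hfL : LocallyLipschitz (Function.uncurry f) := (hf.of_le one_le_two).locallyLipschitz
  have hrt : Tendsto (r * ·) atTop atTop := tendsto_id.const_mul_atTop hr
  have hentry : ∀ y ∈ K, ∀ᶠ p in atTop ×ˢ 𝓝 y, ∀ x,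
      (∀ t, HasDerivAt x (f (x t) (Λ (r * t))) t) →
      x p.1 = p.2 → ∃ t ≥ p.1, dist (x t) Xp < ε := by
    intro y hy
    have hyB : Tendsto (φ y) atTop (𝓝 Xp) := by simpa [hB] using hKB hy
    simpa only [hφ0, Function.comp_apply] using
      eventually_exists_dist_lt_of_tendsto hfL (hΛ.comp hrt) (hφ y) hyB hε
  obtain ⟨T₁, hT₁⟩ := eventually_atTop.1
    ((hK.eventually_forall_mem hentry).and (hrt.eventually_gt_atTop S₁))
  refine ⟨r * max T₁ 1, by positivity, fun x hx T hTK hST => ?_⟩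
  have hT : T₁ ≤ T := (le_max_left _ _).trans (lt_of_mul_lt_mul_left hST hr.le).le
  obtain ⟨t₀, ht₀, hxt₀⟩ := (hT₁ T hT).1 (x T) hTK x hx rfl
  exact hi x hx t₀ hxt₀ (hT₁ t₀ (hT.trans ht₀)).2

/-- Lemma on end behavior (compact subsets of the basin attract): for the
non-autonomous system `ẋ = f(x, Λ(rt))` with `Λ(s) → λ₊`, where `X₊` is an
attracting fixed point of the frozen system at `λ₊` with flow `φ` and basin
`B`, assume (i) there are `ε > 0` and `S₁ > 0` such that any solution lying
within `ε` of `X₊` at some time `t₀` with `r t₀ > S₁` converges to `X₊`, and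
(ii) `K ⊆ B` is compact. Then there is `S > 0` such that any solution with
`x(T) ∈ K` and `rT > S` converges to `X₊`. -/
theorem compact_basin_subset_attracts {n : ℕ}
    (f : EuclideanSpace ℝ (Fin n) → ℝ → EuclideanSpace ℝ (Fin n))
    (hf : ContDiff ℝ 2 fun p : EuclideanSpace ℝ (Fin n) × ℝ => f p.1 p.2)
    (Λ : ℝ → ℝ) (lamp : ℝ) (hΛ : Tendsto Λ atTop (𝓝 lamp))
    (r : ℝ) (hr : 0 < r)
    (Xp : EuclideanSpace ℝ (Fin n)) (hXp : f Xp lamp = 0)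
    (φ : EuclideanSpace ℝ (Fin n) → ℝ → EuclideanSpace ℝ (Fin n))
    (hφ0 : ∀ y, φ y 0 = y)
    (hφ : ∀ y t, HasDerivAt (φ y) (f (φ y t) lamp) t)
    (B : Set (EuclideanSpace ℝ (Fin n)))
    (hB : B = {y | Tendsto (fun t => φ y t) atTop (𝓝 Xp)})
    (hstab : ∀ η > 0, ∃ δ > 0, ∀ y, dist y Xp < δ →
      ∀ t ≥ (0 : ℝ), dist (φ y t) Xp < η)
    (ε S₁ : ℝ) (hε : 0 < ε) (hS₁ : 0 < S₁)
    (hi : ∀ (x : ℝ → EuclideanSpace ℝ (Fin n)),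
      (∀ t, HasDerivAt x (f (x t) (Λ (r * t))) t) →
      ∀ t₀, dist (x t₀) Xp < ε → S₁ < r * t₀ →
        Tendsto x atTop (𝓝 Xp))
    (K : Set (EuclideanSpace ℝ (Fin n))) (hK : IsCompact K) (hKB : K ⊆ B) :
    ∃ S > 0, ∀ (x : ℝ → EuclideanSpace ℝ (Fin n)),
      (∀ t, HasDerivAt x (f (x t) (Λ (r * t))) t) →
      ∀ T, x T ∈ K → S < r * T → Tendsto x atTop (𝓝 Xp) :=
  compact_basin_subset_attracts_general f hf Λ lamp hΛ r hr Xp φ hφ0 hφ B hB ε S₁ hε hi K hK hKB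
end

section
/- Let a, b : [λ₋, λ₊] → ℝ be continuous with b(λ) > −1 and |a(λ)| < √(b(λ)+1) for all λ. Suppose −√(b(λ₁)+1) < a(λ₂) for all λ₁, λ₂ in the closed interval. Then there exist real constants c and d such that c < −√(b(λ)+1) for all λ, and the interval (sup_λ [c³ − a(λ)c² − b(λ)c + a(λ)(b(λ)+1)], c) is nonempty and contains d, so that c³ − a(λ)c² − b(λ)c + a(λ)(b(λ)+1) < d < c for every λ. In particular the uniform corner point p = (c, d) satisfies F₁(p, λ) > 0 and F₂(p, λ) > 0 for all λ, where F(x, λ) = (−x₁³ + a(λ)x₁² + b(λ)x₁ − a(λ)(b(λ)+1) + x₂, x₁ − x₂). -/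
open Set

/-- Uniform corner point for the inflowing box in the example system. If
`a, b` are continuous on `[λ₋, λ₊]` with `b > −1`, `|a| < √(b+1)`, and
`−√(b(λ₁)+1) < a(λ₂)` for all `λ₁, λ₂`, then there are constants `c < d`...
more precisely there exist `c` and `d` with `c < −√(b(λ)+1)` for all `λ`,
`c³ − a(λ)c² − b(λ)c + a(λ)(b(λ)+1) < d < c` for all `λ`, and the corner
`p = (c, d)` satisfies `F₁(p, λ) > 0` and `F₂(p, λ) > 0` for every `λ`. -/
theorem uniform_corner_point (lamm lamp : ℝ) (hlam : lamm ≤ lamp)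
    (a b : ℝ → ℝ)
    (hacont : ContinuousOn a (Icc lamm lamp))
    (hbcont : ContinuousOn b (Icc lamm lamp))
    (hb : ∀ lam ∈ Icc lamm lamp, -1 < b lam)
    (ha : ∀ lam ∈ Icc lamm lamp, |a lam| < Real.sqrt (b lam + 1))
    (hcross : ∀ lam₁ ∈ Icc lamm lamp, ∀ lam₂ ∈ Icc lamm lamp,
      -Real.sqrt (b lam₁ + 1) < a lam₂) :
    ∃ c d : ℝ, d < c ∧
      (∀ lam ∈ Icc lamm lamp, c < -Real.sqrt (b lam + 1)) ∧
      (∀ lam ∈ Icc lamm lamp,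
        c ^ 3 - a lam * c ^ 2 - b lam * c + a lam * (b lam + 1) < d) ∧
      (∀ lam ∈ Icc lamm lamp,
        0 < -c ^ 3 + a lam * c ^ 2 + b lam * c - a lam * (b lam + 1) + d ∧
        0 < c - d) := by
  have hne : (Icc lamm lamp).Nonempty := nonempty_Icc.mpr hlam
  have hcpt : IsCompact (Icc lamm lamp) := isCompact_Icc
  have hgcont : ContinuousOn (fun lam => -Real.sqrt (b lam + 1)) (Icc lamm lamp) :=
    ((hbcont.add continuousOn_const).sqrt).neg
  obtain ⟨l0, hl0, hmin⟩ := hcpt.exists_isMinOn hne hgcont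
  obtain ⟨c, hc⟩ : ∃ c : ℝ, c = -Real.sqrt (b l0 + 1) - 1 := ⟨_, rfl⟩
  have hclt : ∀ lam ∈ Icc lamm lamp, c < -Real.sqrt (b lam + 1) := by
    intro lam hlam'
    have h := hmin hlam'
    simp only [mem_setOf_eq] at h
    linarith
  have hfcont : ContinuousOn
      (fun lam => c ^ 3 - a lam * c ^ 2 - b lam * c + a lam * (b lam + 1))
      (Icc lamm lamp) := by
    apply ContinuousOn.add
    · exact (continuousOn_const.sub (hacont.mul continuousOn_const)).sub
        (hbcont.mul continuousOn_const)
    · exact hacont.mul (hbcont.add continuousOn_const)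
  obtain ⟨l1, hl1, hmax⟩ := hcpt.exists_isMaxOn hne hfcont
  have hflt : ∀ lam ∈ Icc lamm lamp,
      c ^ 3 - a lam * c ^ 2 - b lam * c + a lam * (b lam + 1) < c := by
    intro lam hlam'
    have hb1 : (0:ℝ) < b lam + 1 := by linarith [hb lam hlam']
    have hs : Real.sqrt (b lam + 1) ^ 2 = b lam + 1 := Real.sq_sqrt hb1.le
    have hcneg : c < -Real.sqrt (b lam + 1) := hclt lam hlam'
    have hsnn : 0 ≤ Real.sqrt (b lam + 1) := Real.sqrt_nonneg _
    have hca : c < a lam := by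
      have := hcross lam hlam' lam hlam'
      linarith
    have hcsq : b lam + 1 < c ^ 2 := by nlinarith
    nlinarith [mul_pos (by linarith : (0:ℝ) < a lam - c) (by linarith : (0:ℝ) < c ^ 2 - (b lam + 1))]
  obtain ⟨d, hd⟩ : ∃ d : ℝ,
      d = ((c ^ 3 - a l1 * c ^ 2 - b l1 * c + a l1 * (b l1 + 1)) + c) / 2 := ⟨_, rfl⟩
  have hfl1 := hflt l1 hl1
  have hdlt : d < c := by rw [hd]; linarith
  have hless : ∀ lam ∈ Icc lamm lamp,
      c ^ 3 - a lam * c ^ 2 - b lam * c + a lam * (b lam + 1) < d := by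
    intro lam hlam'
    have h := hmax hlam'
    simp only [mem_setOf_eq] at h
    rw [hd]; linarith
  exact ⟨c, d, hdlt, hclt, hless, fun lam hlam' =>
    ⟨by linarith [hless lam hlam'], by linarith⟩⟩
end
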